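/- NQGL does not have the Craig interpolation property: with A(p) := ∀u □(p → P(u)), the NQGL-provable implication ∃v_0(⊡(A(Q(v_0)) ↔ Q(v_0)) ∧ Q(v_0)) → ∀v_1(⊡(A(R(v_1)) ↔ R(v_1)) → R(v_1)) has no interpolant: there is no sentence G containing only the predicate symbol P with NQGL proving the antecedent → G and G → the consequent. -/

import Mathlib

namespace PML

/-- Formulas of predicate modal logic, with propositional variables (language L''). -/
inductive Fml : Type
  | verum : Fml
  | falsum : Fml
  | pvar (q : ℕ) : Fml
  | pred (P : ℕ) (args : List ℕ) : Fml
  | neg (A : Fml) : Fml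
  | imp (A B : Fml) : Fml
  | all (u : ℕ) (A : Fml) : Fml
  | box (A : Fml) : Fml

namespace Fml

def lor (A B : Fml) : Fml := A.neg.imp B
def land (A B : Fml) : Fml := (A.imp B.neg).neg
def iff (A B : Fml) : Fml := (A.imp B).land (B.imp A)
def ex (u : ℕ) (A : Fml) : Fml := (Fml.all u A.neg).neg
def boxdot (A : Fml) : Fml := A.box.land A

def boxIter : ℕ → Fml → Fml
  | 0, A => A
  | n + 1, A => (boxIter n A).box

/-- Free variables. -/
def free : Fml → Finset ℕ
  | pred _ args => args.toFinset
  | neg A => A.free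
  | imp A B => A.free ∪ B.free
  | all u A => A.free.erase u
  | box A => A.free
  | _ => ∅

/-- Bound variables. -/
def bound : Fml → Finset ℕ
  | neg A => A.bound
  | imp A B => A.bound ∪ B.bound
  | all u A => insert u A.bound
  | box A => A.bound
  | _ => ∅

/-- Propositional variables occurring in a formula. -/
def pvars : Fml → Finset ℕ
  | pvar q => {q}
  | neg A => A.pvars
  | imp A B => A.pvars ∪ B.pvars
  | all _ A => A.pvars
  | box A => A.pvars
  | _ => ∅

/-- Predicate symbols occurring in a formula. -/
def preds : Fml → Finset ℕ
  | pred P _ => {P}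
  | neg A => A.preds
  | imp A B => A.preds ∪ B.preds
  | all _ A => A.preds
  | box A => A.preds
  | _ => ∅

/-- Predicate symbols together with the arity they are used with. -/
def predSig : Fml → Finset (ℕ × ℕ)
  | pred P args => {(P, args.length)}
  | neg A => A.predSig
  | imp A B => A.predSig ∪ B.predSig
  | all _ A => A.predSig
  | box A => A.predSig
  | _ => ∅

/-- Rename free occurrences of the variable `u` to `v`. -/
def rename : Fml → ℕ → ℕ → Fml
  | pred P args, u, v => pred P (args.map fun x => if x = u then v else x)
  | neg A, u, v => (A.rename u v).neg
  | imp A B, u, v => (A.rename u v).imp (B.rename u v)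
  | all w A, u, v => if w = u then all w A else all w (A.rename u v)
  | box A, u, v => (A.rename u v).box
  | A, _, _ => A

/-- Substitution of a formula for a propositional variable. -/
def psub : Fml → ℕ → Fml → Fml
  | pvar q, p, B => if q = p then B else pvar q
  | neg A, p, B => (A.psub p B).neg
  | imp A C, p, B => (A.psub p B).imp (C.psub p B)
  | all u A, p, B => all u (A.psub p B)
  | box A, p, B => (A.psub p B).box
  | A, _, _ => A

/-- Simultaneous substitution of formulas for all propositional variables. -/
def msub : Fml → (ℕ → Fml) → Fml
  | pvar q, σ => σ q
  | neg A, σ => (A.msub σ).neg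
  | imp A C, σ => (A.msub σ).imp (C.msub σ)
  | all u A, σ => all u (A.msub σ)
  | box A, σ => (A.msub σ).box
  | A, _ => A

/-- Depth-indexed substitution: occurrences of `p` at modal depth `i` are replaced by `σ i`. -/
def dsub : Fml → ℕ → (ℕ → Fml) → Fml
  | pvar q, p, σ => if q = p then σ 0 else pvar q
  | neg A, p, σ => (A.dsub p σ).neg
  | imp A C, p, σ => (A.dsub p σ).imp (C.dsub p σ)
  | all u A, p, σ => all u (A.dsub p σ)
  | box A, p, σ => (A.dsub p (fun i => σ (i + 1))).box
  | A, _, _ => A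

/-- `A(p)[B_0,…,B_k]` for a list `[B_0,…,B_k]`. -/
def dsubL (A : Fml) (p : ℕ) (L : List Fml) : Fml := A.dsub p (fun i => L.getD i verum)

/-- `A^{⊤(n)}`: replace every boxed subformula at modal depth `n` by `⊤`. -/
def eraseT : ℕ → Fml → Fml
  | 0, box _ => verum
  | n + 1, box A => (eraseT n A).box
  | n, neg A => (eraseT n A).neg
  | n, imp A B => (eraseT n A).imp (eraseT n B)
  | n, all u A => all u (eraseT n A)
  | _, A => A

/-- `occursAt p A d`: the propositional variable `p` occurs in `A` at modal depth `d`. -/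
def occursAt (p : ℕ) : Fml → ℕ → Prop
  | pvar q, d => q = p ∧ d = 0
  | neg A, d => occursAt p A d
  | imp A B, d => occursAt p A d ∨ occursAt p B d
  | all _ A, d => occursAt p A d
  | box A, d => ∃ d', d = d' + 1 ∧ occursAt p A d'
  | _, _ => False

/-- `A` is modalized in `p`: no occurrence of `p` at depth `0`. -/
def Modalized (p : ℕ) (A : Fml) : Prop := ¬ occursAt p A 0

/-- Conjunction of a list of formulas. -/
def conj : List Fml → Fml
  | [] => verum
  | A :: L => A.land (conj L)

/-- The canonical fixed-point sequence:
`A_0 := A^{⊤(0)}(p)[⊤]`, `A_{k+1} := A^{⊤(k+1)}(p)[⊤, A_k, …, A_0]`. -/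
def fpSeq (p : ℕ) (A : Fml) : ℕ → Fml
  | 0 => (eraseT 0 A).dsub p (fun _ => verum)
  | n + 1 => (eraseT (n + 1) A).dsub p
      (fun i => match i with
        | 0 => verum
        | j + 1 => fpSeq p A (n - j))
  termination_by k => k
  decreasing_by omega

end Fml

open Fml

/-- Axioms of predicate logic, together with the modal distribution axiom K. -/
inductive Ax : Fml → Prop
  | imp1 (A B : Fml) : Ax (A.imp (B.imp A))
  | imp2 (A B C : Fml) : Ax ((A.imp (B.imp C)).imp ((A.imp B).imp (A.imp C)))
  | contra (A B : Fml) : Ax ((A.neg.imp B.neg).imp (B.imp A))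
  | verum : Ax Fml.verum
  | exfalso (A : Fml) : Ax (Fml.falsum.imp A)
  | negE (A : Fml) : Ax (A.neg.imp (A.imp Fml.falsum))
  | negI (A : Fml) : Ax ((A.imp Fml.falsum).imp A.neg)
  | allE (A : Fml) (u v : ℕ) (h : v ∉ A.bound) : Ax ((Fml.all u A).imp (A.rename u v))
  | allK (A B : Fml) (u : ℕ) :
      Ax ((Fml.all u (A.imp B)).imp ((Fml.all u A).imp (Fml.all u B)))
  | allV (A : Fml) (u : ℕ) (h : u ∉ A.free) : Ax (A.imp (Fml.all u A))
  | k (A B : Fml) : Ax (((A.imp B).box).imp (A.box.imp B.box))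

/-- Hilbert-style provability from the base axioms plus extra axioms `Ext`,
closed under modus ponens, necessitation and generalization. -/
inductive Prf (Ext : Fml → Prop) : Fml → Prop
  | ax {A : Fml} : Ax A → Prf Ext A
  | ext {A : Fml} : Ext A → Prf Ext A
  | mp {A B : Fml} : Prf Ext (A.imp B) → Prf Ext A → Prf Ext B
  | nec {A : Fml} : Prf Ext A → Prf Ext A.box
  | gen {A : Fml} (u : ℕ) : Prf Ext A → Prf Ext (Fml.all u A)

/-- The smallest normal predicate modal logic QK. -/
def QK : Fml → Prop := Prf (fun _ => False)

inductive Ax4 : Fml → Prop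
  | four (A : Fml) : Ax4 (A.box.imp A.box.box)

/-- QK4 : QK plus the axiom 4. -/
def QK4 : Fml → Prop := Prf Ax4

inductive AxL : Fml → Prop
  | lob (A : Fml) : AxL (((A.box.imp A).box).imp A.box)

/-- QGL : QK plus Löb's axiom. -/
def QGL : Fml → Prop := Prf AxL

/-- NQGL : QK4 plus the infinitary rule BL. -/
inductive NQGL : Fml → Prop
  | ax {A : Fml} : Ax A → NQGL A
  | four (A : Fml) : NQGL (A.box.imp A.box.box)
  | mp {A B : Fml} : NQGL (A.imp B) → NQGL A → NQGL B
  | nec {A : Fml} : NQGL A → NQGL A.box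
  | gen {A : Fml} (u : ℕ) : NQGL A → NQGL (Fml.all u A)
  | bl {A : Fml} : (∀ n : ℕ, NQGL ((boxIter (n + 1) Fml.falsum).imp A)) → NQGL A

/-- Σ-formulas. -/
inductive IsSigma : Fml → Prop
  | box (A : Fml) : IsSigma A.box
  | lor {A B : Fml} : IsSigma A → IsSigma B → IsSigma (A.lor B)
  | land {A B : Fml} : IsSigma A → IsSigma B → IsSigma (A.land B)
  | ex {A : Fml} (u : ℕ) : IsSigma A → IsSigma (Fml.ex u A)

/- ## Kripke semantics -/

structure KFrame where
  W : Type
  R : W → W → Prop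
  Dom : Type
  D : W → Set Dom
  Dne : ∀ w, (D w).Nonempty
  mono : ∀ {w w'}, R w w' → D w ⊆ D w'

structure KModel extends KFrame where
  I : W → ℕ → List Dom → Prop
  V : W → ℕ → Prop

def Sat (M : KModel) : Fml → M.W → (ℕ → M.Dom) → Prop
  | .verum, _, _ => True
  | .falsum, _, _ => False
  | .pvar q, w, _ => M.V w q
  | .pred P args, w, ρ => M.I w P (args.map ρ)
  | .neg A, w, ρ => ¬ Sat M A w ρ
  | .imp A B, w, ρ => Sat M A w ρ → Sat M B w ρ
  | .all u A, w, ρ => ∀ a ∈ M.D w, Sat M A w (Function.update ρ u a)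
  | .box A, w, ρ => ∀ v, M.R w v → Sat M A v ρ

/-- Validity in a model. -/
def MVal (M : KModel) (A : Fml) : Prop :=
  ∀ (w : M.W) (ρ : ℕ → M.Dom), (∀ x, ρ x ∈ M.D w) → Sat M A w ρ

/-- Validity on a frame. -/
def FVal (F : KFrame) (A : Fml) : Prop :=
  ∀ (I : F.W → ℕ → List F.Dom → Prop) (V : F.W → ℕ → Prop),
    MVal { toKFrame := F, I := I, V := V } A

/-- Smoryński's model. -/
def MS : KModel where
  W := ℕ
  R := fun m n => n < m
  Dom := ℕ
  D := fun n => {m | n ≤ m}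
  Dne := fun n => ⟨n, le_refl n⟩
  mono := by intro w w' h x hx; simp only [Set.mem_setOf_eq] at *; omega
  I := fun w P L => P = 0 ∧ ∀ m ∈ L, m ≠ w + 1
  V := fun _ _ => False

/-- The finite truncations of Smoryński's model. -/
def Mk (k : ℕ) : KModel where
  W := Fin (k + 1)
  R := fun m n => (n : ℕ) < (m : ℕ)
  Dom := ℕ
  D := fun n => {m | (n : ℕ) ≤ m ∧ m ≤ k + 2}
  Dne := fun n => ⟨(n : ℕ), by simp only [Set.mem_setOf_eq]; have := n.isLt; omega⟩
  mono := by intro w w' h x hx; simp only [Set.mem_setOf_eq] at *; omega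
  I := fun w P L => P = 0 ∧ ∀ m ∈ L, m ≠ (w : ℕ) + 1
  V := fun _ _ => False

/-- `A` contains only the unary predicate symbol `P` (coded `0`) and no propositional variables. -/
def OnlyP (A : Fml) : Prop := A.predSig ⊆ {(0, 1)} ∧ A.pvars = ∅

/-- The atomic formula `P(u)`. -/
def Pat (u : ℕ) : Fml := Fml.pred 0 [u]

/-- `h(F) ≤ n`: there is no chain of `n+1` successive `R`-steps. -/
def HeightLe (F : KFrame) (n : ℕ) : Prop :=
  ∀ c : ℕ → F.W, ¬ ∀ i < n + 1, F.R (c i) (c (i + 1))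

end PML

namespace PML
/-- `A(p) := ∀u □(p → P(u))`, with `p` the propositional variable 0, `u` the variable 0,
and `P` the unary predicate symbol 0. -/
def AMon : Fml := Fml.all 0 (((Fml.pvar 0).imp (Fml.pred 0 [0])).box)
/-- `A(B)`. -/
def AMonAp (B : Fml) : Fml := AMon.psub 0 B
/-- The antecedent `∃v₀(⊡(A(Q(v₀)) ↔ Q(v₀)) ∧ Q(v₀))`, with `v₀` the variable 1 and `Q`
the unary predicate symbol 1. -/
def ante : Fml :=
  Fml.ex 1 ((Fml.boxdot ((AMonAp (Fml.pred 1 [1])).iff (Fml.pred 1 [1]))).land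
    (Fml.pred 1 [1]))
/-- The consequent `∀v₁(⊡(A(R(v₁)) ↔ R(v₁)) → R(v₁))`, with `v₁` the variable 2 and `R`
the unary predicate symbol 2. -/
def cons : Fml :=
  Fml.all 2 ((Fml.boxdot ((AMonAp (Fml.pred 2 [2])).iff (Fml.pred 2 [2]))).imp
    (Fml.pred 2 [2]))
end PML

namespace PML

open Fml

/-! `NQGL ⊢ ante → cons` because `A(p) = ∀u □(p → P(u))` has at most one fixed point up to
provable equivalence: writing `S` for `⊡(A(X) ↔ X) ∧ ⊡(A(Y) ↔ Y) → (X ↔ Y)`, the logic proves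
`□S → S` (under the hypotheses `□S` yields `□(X ↔ Y)`, and `A(X)` depends on `X` only under a box),
hence `S` by Löb's rule.

There is no interpolant in `P` alone. Interpret `Q` and `R` in Smoryński's model `MS` as "the world
is even": both become fixed points of `A` at every world, so the antecedent holds at even worlds and
the consequent fails at odd ones, and an interpolant would separate the worlds `2k` and `2k + 1`.
But at a world `w` the atom `P(x)` only says `x ≠ w + 1`, and a back-and-forth argument shows that a
`P`-sentence of quantifier-and-modal depth `k` takes the same value at any two worlds `≥ 2k`. -/

inductive PDeriv (Γ : List Fml) : Fml → Prop
  | hyp {A : Fml} : A ∈ Γ → PDeriv Γ A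
  | ax {A : Fml} : Ax A → PDeriv Γ A
  | mp {A B : Fml} : PDeriv Γ (A.imp B) → PDeriv Γ A → PDeriv Γ B

namespace PDeriv

variable {Γ Δ : List Fml} {A B C : Fml}

theorem mono (h : PDeriv Γ A) (hΓ : Γ ⊆ Δ) : PDeriv Δ A := by
  induction h with
  | hyp h => exact .hyp (hΓ h)
  | ax h => exact .ax h
  | mp _ _ ih₁ ih₂ => exact .mp ih₁ ih₂

theorem weaken (h : PDeriv Γ A) : PDeriv (B :: Γ) A :=
  h.mono (List.subset_cons_self B Γ)

theorem head : PDeriv (A :: Γ) A := .hyp List.mem_cons_self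

theorem imp_self : PDeriv Γ (A.imp A) :=
  .mp (.mp (.ax (.imp2 A (A.imp A) A)) (.ax (.imp1 A (A.imp A)))) (.ax (.imp1 A A))

theorem deduction (h : PDeriv (A :: Γ) B) : PDeriv Γ (A.imp B) := by
  induction h with
  | @hyp C h =>
    rcases List.mem_cons.mp h with rfl | h
    · exact imp_self
    · exact .mp (.ax (.imp1 C A)) (.hyp h)
  | @ax C h => exact .mp (.ax (.imp1 C A)) (.ax h)
  | mp _ _ ih₁ ih₂ => exact .mp (.mp (.ax (.imp2 ..)) ih₁) ih₂

theorem exfalso (h : PDeriv Γ falsum) : PDeriv Γ A := .mp (.ax (.exfalso A)) h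

theorem absurd (h₁ : PDeriv Γ A.neg) (h₂ : PDeriv Γ A) : PDeriv Γ falsum :=
  .mp (.mp (.ax (.negE A)) h₁) h₂

theorem neg_intro (h : PDeriv (A :: Γ) falsum) : PDeriv Γ A.neg :=
  .mp (.ax (.negI A)) h.deduction

theorem neg_neg (h : PDeriv Γ A) : PDeriv Γ A.neg.neg :=
  neg_intro (absurd head h.weaken)

theorem of_neg_neg (h : PDeriv Γ A.neg.neg) : PDeriv Γ A :=
  have h' : PDeriv Γ (A.neg.imp verum.neg) :=
    deduction (neg_intro (absurd h.weaken.weaken head.weaken))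
  .mp (.mp (.ax (.contra A verum)) h') (.ax .verum)

theorem by_cases (h₁ : PDeriv (A :: Γ) C) (h₂ : PDeriv (A.neg :: Γ) C) : PDeriv Γ C :=
  have h_neg : PDeriv (C.neg :: Γ) A.neg :=
    neg_intro (absurd head.weaken (h₁.mono (List.cons_subset_cons A (List.subset_cons_self _ _))))
  of_neg_neg (neg_intro (absurd head (.mp h₂.deduction.weaken h_neg)))

theorem toNQGL (h : PDeriv [] A) : NQGL A := by
  induction h with
  | hyp h => simp at h
  | ax h => exact .ax h
  | mp _ _ ih₁ ih₂ => exact .mp ih₁ ih₂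

end PDeriv

inductive PropForm (n : ℕ) : Type
  | atm (i : Fin n) : PropForm n
  | neg (a : PropForm n) : PropForm n
  | imp (a b : PropForm n) : PropForm n

namespace PropForm

variable {n : ℕ}

def and (a b : PropForm n) : PropForm n := neg (imp a (neg b))

def iff (a b : PropForm n) : PropForm n := and (imp a b) (imp b a)

def eval (b : Fin n → Bool) : PropForm n → Bool
  | atm i => b i
  | neg a => !a.eval b
  | imp a c => !a.eval b || c.eval b

def toFml (σ : Fin n → Fml) : PropForm n → Fml
  | atm i => σ i
  | neg a => (a.toFml σ).neg
  | imp a c => (a.toFml σ).imp (c.toFml σ)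

def signed (σ : Fin n → Fml) (b : Fin n → Bool) (φ : PropForm n) : Fml :=
  if φ.eval b then φ.toFml σ else (φ.toFml σ).neg

/-- Kalmár's lemma. -/
theorem pDeriv_signed (σ : Fin n → Fml) (b : Fin n → Bool) {Γ : List Fml}
    (hΓ : ∀ i, (atm i).signed σ b ∈ Γ) : ∀ φ : PropForm n, PDeriv Γ (φ.signed σ b)
  | atm i => .hyp (hΓ i)
  | neg a => by
    have ih := pDeriv_signed σ b hΓ a
    unfold signed at ih ⊢
    cases ha : a.eval b <;>
      simp only [eval, toFml, ha, Bool.not_true, Bool.not_false, Bool.false_eq_true,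
        ↓reduceIte] at ih ⊢
    · exact ih
    · exact ih.neg_neg
  | imp a c => by
    have iha := pDeriv_signed σ b hΓ a
    have ihc := pDeriv_signed σ b hΓ c
    unfold signed at iha ihc ⊢
    cases hc : c.eval b <;> cases ha : a.eval b <;>
      simp only [eval, toFml, ha, hc, Bool.not_true, Bool.not_false, Bool.false_eq_true,
        Bool.or_true, Bool.or_false, ↓reduceIte] at iha ihc ⊢
    · exact PDeriv.deduction (PDeriv.absurd iha.weaken PDeriv.head).exfalso
    · exact PDeriv.neg_intro (PDeriv.absurd ihc.weaken (.mp PDeriv.head iha.weaken))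
    · exact .mp (.ax (.imp1 ..)) ihc
    · exact .mp (.ax (.imp1 ..)) ihc

theorem pDeriv_of_tautology (σ : Fin n → Fml) {φ : PropForm n} (hφ : ∀ b, φ.eval b = true)
    (s : Finset (Fin n)) :
    ∀ b Γ, (∀ i ∉ s, (atm i).signed σ b ∈ Γ) → PDeriv Γ (φ.toFml σ) := by
  induction s using Finset.induction_on with
  | empty =>
    intro b Γ hΓ
    simpa [signed, hφ b] using pDeriv_signed σ b (fun i => hΓ i (Finset.notMem_empty i)) φ
  | insert i s _ ih =>
    intro b Γ hΓ
    have branch (c : Bool) :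
        PDeriv ((atm i).signed σ (Function.update b i c) :: Γ) (φ.toFml σ) := by
      refine ih (Function.update b i c) _ fun j hj => ?_
      by_cases hji : j = i
      · subst hji
        exact List.mem_cons_self
      · have hsame : (atm j).signed σ (Function.update b i c) = (atm j).signed σ b := by
          rw [signed, signed, eval, eval, Function.update_of_ne hji]
        rw [hsame]
        exact List.mem_cons_of_mem _ (hΓ j (by simp [hji, hj]))
    exact PDeriv.by_cases (by simpa [signed, eval] using branch true)
      (by simpa [signed, eval] using branch false)

end PropForm

local prefix:max "#" => PropForm.atm
local infixr:25 " ⇒ " => PropForm.imp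
local infixl:35 " ⋏ " => PropForm.and
local infix:30 " ⇔ " => PropForm.iff
local prefix:max "∼" => PropForm.neg

-- for `decide` on the truth tables of the tautologies below
set_option maxRecDepth 10000

namespace NQGL

variable {A B C : Fml} {u : ℕ}

theorem of_tautology {n : ℕ} (σ : Fin n → Fml) (φ : PropForm n) (hφ : ∀ b, φ.eval b = true) :
    NQGL (φ.toFml σ) :=
  (PropForm.pDeriv_of_tautology σ hφ Finset.univ (fun _ => false) [] (by simp)).toNQGL

theorem imp_trans (h₁ : NQGL (A.imp B)) (h₂ : NQGL (B.imp C)) : NQGL (A.imp C) :=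
  of_tautology ![A, B, C] ((#0 ⇒ #1) ⇒ (#1 ⇒ #2) ⇒ #0 ⇒ #2) (by decide) |>.mp h₁ |>.mp h₂

theorem box_mono (h : NQGL (A.imp B)) : NQGL (A.box.imp B.box) :=
  (NQGL.ax (.k A B)).mp h.nec

theorem box_imp_box_imp_box_land : NQGL (A.box.imp (B.box.imp (A.land B).box)) :=
  imp_trans (box_mono (of_tautology ![A, B] (#0 ⇒ #1 ⇒ #0 ⋏ #1) (by decide))) (.ax (.k _ _))

theorem boxdot_imp_box_boxdot : NQGL (A.boxdot.imp A.boxdot.box) :=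
  of_tautology ![A.box, A, A.box.box, (A.box.land A).box]
      ((#0 ⇒ #2) ⇒ (#2 ⇒ #0 ⇒ #3) ⇒ #0 ⋏ #1 ⇒ #3) (by decide)
    |>.mp (.four A) |>.mp box_imp_box_imp_box_land

theorem boxIter_falsum_imp_lob (n : ℕ) :
    NQGL ((boxIter (n + 1) falsum).imp ((A.box.imp A).box.imp A.box)) := by
  induction n with
  | zero =>
    exact of_tautology ![falsum.box, A.box, (A.box.imp A).box]
      ((#0 ⇒ #1) ⇒ #0 ⇒ #2 ⇒ #1) (by decide) |>.mp (box_mono (.ax (.exfalso A)))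
  | succ n ih =>
    -- boxing the claim for `n` gives `□^{n+2}⊥ → □□(□A → A) → □□A`, and both `□□(□A → A)`
    -- (axiom 4) and `□□A → □A` (axiom K) follow from `□(□A → A)`
    have ih_boxed := box_mono ih
    have h_dist : NQGL (((A.box.imp A).box.imp A.box).box.imp
        ((A.box.imp A).box.box.imp A.box.box)) := .ax (.k _ _)
    have h_K : NQGL ((A.box.imp A).box.imp (A.box.box.imp A.box)) := .ax (.k A.box A)
    exact of_tautology ![boxIter (n + 2) falsum, ((A.box.imp A).box.imp A.box).box,
        (A.box.imp A).box, (A.box.imp A).box.box, A.box.box, A.box]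
      ((#0 ⇒ #1) ⇒ (#1 ⇒ #3 ⇒ #4) ⇒ (#2 ⇒ #3) ⇒ (#2 ⇒ #4 ⇒ #5) ⇒ #0 ⇒ #2 ⇒ #5) (by decide)
      |>.mp ih_boxed |>.mp h_dist |>.mp (.four _) |>.mp h_K

theorem lob (A : Fml) : NQGL ((A.box.imp A).box.imp A.box) :=
  .bl boxIter_falsum_imp_lob

theorem lob_rule (h : NQGL (A.box.imp A)) : NQGL A :=
  h.mp ((lob A).mp h.nec)

theorem all_mono (h : NQGL (A.imp B)) : NQGL ((all u A).imp (all u B)) :=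
  (NQGL.ax (.allK A B u)).mp (.gen u h)

theorem imp_all (hu : u ∉ A.free) (h : NQGL (A.imp B)) : NQGL (A.imp (all u B)) :=
  imp_trans (.ax (.allV A u hu)) (all_mono h)

theorem ex_imp (hu : u ∉ B.free) (h : NQGL (A.imp B)) : NQGL ((ex u A).imp B) :=
  have contra : NQGL (B.neg.imp (all u A.neg)) :=
    imp_all hu (of_tautology ![A, B] ((#0 ⇒ #1) ⇒ ∼#1 ⇒ ∼#0) (by decide) |>.mp h)
  of_tautology ![B, all u A.neg] ((∼#0 ⇒ #1) ⇒ ∼#1 ⇒ #0) (by decide) |>.mp contra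

theorem box_imp_all_box_imp_mono {X Y Z : Fml} (hu : u ∉ (Y.imp X).free) :
    NQGL ((Y.imp X).box.imp ((all u (X.imp Z).box).imp (all u (Y.imp Z).box))) :=
  have h : NQGL ((Y.imp X).box.imp ((X.imp Z).box.imp (Y.imp Z).box)) :=
    imp_trans (box_mono (of_tautology ![X, Y, Z] ((#1 ⇒ #0) ⇒ (#0 ⇒ #2) ⇒ #1 ⇒ #2) (by decide)))
      (.ax (.k _ _))
  imp_trans (imp_all hu h) (.ax (.allK _ _ u))

end NQGL

open NQGL

theorem AMonAp_fixedPoint_unique {X Y : Fml} (hX : 0 ∉ X.free) (hY : 0 ∉ Y.free) :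
    NQGL ((((AMonAp X).iff X).boxdot.land ((AMonAp Y).iff Y).boxdot).imp (X.iff Y)) := by
  set EX := (AMonAp X).iff X
  set EY := (AMonAp Y).iff Y
  set S := (EX.boxdot.land EY.boxdot).imp (X.iff Y)
  refine lob_rule ?_
  have h_box : NQGL (S.box.imp (EX.boxdot.imp (EY.boxdot.imp (X.iff Y).box))) :=
    of_tautology ![S.box, EX.boxdot, EY.boxdot, EX.boxdot.box, EY.boxdot.box,
        (EX.boxdot.land EY.boxdot).box, (X.iff Y).box]
      ((#1 ⇒ #3) ⇒ (#2 ⇒ #4) ⇒ (#3 ⇒ #4 ⇒ #5) ⇒ (#0 ⇒ #5 ⇒ #6) ⇒ #0 ⇒ #1 ⇒ #2 ⇒ #6) (by decide)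
      |>.mp boxdot_imp_box_boxdot |>.mp boxdot_imp_box_boxdot |>.mp box_imp_box_imp_box_land
      |>.mp (.ax (.k _ _))
  have hu : 0 ∉ (Y.imp X).free ∧ 0 ∉ (X.imp Y).free := by simp [free, hX, hY]
  have h_XY : NQGL ((X.iff Y).box.imp ((AMonAp X).imp (AMonAp Y))) :=
    imp_trans (box_mono (of_tautology ![X, Y] (#0 ⇔ #1 ⇒ #1 ⇒ #0) (by decide)))
      (box_imp_all_box_imp_mono hu.1)
  have h_YX : NQGL ((X.iff Y).box.imp ((AMonAp Y).imp (AMonAp X))) :=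
    imp_trans (box_mono (of_tautology ![X, Y] (#0 ⇔ #1 ⇒ #0 ⇒ #1) (by decide)))
      (box_imp_all_box_imp_mono hu.2)
  exact of_tautology ![S.box, (X.iff Y).box, EX.box, AMonAp X, X, EY.box, AMonAp Y, Y]
      ((#0 ⇒ #2 ⋏ (#3 ⇔ #4) ⇒ #5 ⋏ (#6 ⇔ #7) ⇒ #1) ⇒ (#1 ⇒ #3 ⇒ #6) ⇒ (#1 ⇒ #6 ⇒ #3) ⇒
        #0 ⇒ #2 ⋏ (#3 ⇔ #4) ⋏ (#5 ⋏ (#6 ⇔ #7)) ⇒ (#4 ⇔ #7)) (by decide)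
    |>.mp h_box |>.mp h_XY |>.mp h_YX

theorem ante_imp_cons : NQGL (ante.imp cons) := by
  have h := AMonAp_fixedPoint_unique (X := pred 1 [1]) (Y := pred 2 [2]) (by decide) (by decide)
  set EQ := (AMonAp (pred 1 [1])).iff (pred 1 [1])
  set ER := (AMonAp (pred 2 [2])).iff (pred 2 [2])
  have h_open : NQGL ((EQ.boxdot.land (pred 1 [1])).imp (ER.boxdot.imp (pred 2 [2]))) :=
    of_tautology ![EQ.boxdot, ER.boxdot, pred 1 [1], pred 2 [2]]
      ((#0 ⋏ #1 ⇒ (#2 ⇔ #3)) ⇒ #0 ⋏ #2 ⇒ #1 ⇒ #3) (by decide) |>.mp h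
  exact ex_imp (by decide) (imp_all (by decide) h_open)

section Semantics

variable (M : KModel)

theorem sat_congr_free (A : Fml) (w : M.W) {ρ₁ ρ₂ : ℕ → M.Dom}
    (h : ∀ x ∈ A.free, ρ₁ x = ρ₂ x) : Sat M A w ρ₁ ↔ Sat M A w ρ₂ := by
  induction A generalizing w ρ₁ ρ₂ with
  | pred P args =>
    have hargs : args.map ρ₁ = args.map ρ₂ :=
      List.map_congr_left fun x hx => h x (by simpa [free] using hx)
    simp only [Sat, hargs]
  | neg A ih => exact not_congr (ih w h)
  | imp A B ihA ihB =>
    exact imp_congr (ihA w fun x hx => h x (Finset.mem_union_left _ hx))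
      (ihB w fun x hx => h x (Finset.mem_union_right _ hx))
  | all u A ih =>
    refine forall₂_congr fun a _ => ih w fun x hx => ?_
    by_cases hxu : x = u
    · simp [hxu]
    · simpa [hxu] using h x (Finset.mem_erase.mpr ⟨hxu, hx⟩)
  | box A ih => exact forall₂_congr fun v _ => ih v h
  | _ => exact Iff.rfl

theorem sat_rename (A : Fml) {u v : ℕ} (hv : v ∉ A.bound) (w : M.W) (ρ : ℕ → M.Dom) :
    Sat M (A.rename u v) w ρ ↔ Sat M A w (Function.update ρ u (ρ v)) := by
  induction A generalizing w ρ with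
  | pred P args =>
    simp only [rename, Sat, List.map_map]
    refine iff_of_eq (congrArg _ (List.map_congr_left fun x _ => ?_))
    by_cases hxu : x = u <;> simp [hxu]
  | neg A ih => exact not_congr (ih hv w ρ)
  | imp A B ihA ihB =>
    exact imp_congr (ihA (fun h => hv (Finset.mem_union_left _ h)) w ρ)
      (ihB (fun h => hv (Finset.mem_union_right _ h)) w ρ)
  | all x A ih =>
    have hvx : v ≠ x := fun h => hv (h ▸ Finset.mem_insert_self _ _)
    by_cases hxu : x = u
    · subst hxu
      simp only [rename, ↓reduceIte, Sat, Function.update_idem]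
    · simp only [rename, hxu, ↓reduceIte, Sat]
      refine forall₂_congr fun a _ => ?_
      rw [ih (fun h => hv (Finset.mem_insert_of_mem h)), Function.update_of_ne hvx,
        Function.update_comm hxu]
  | box A ih => exact forall₂_congr fun w' _ => ih hv w' ρ
  | _ => exact Iff.rfl

theorem Ax.sound {A : Fml} (h : Ax A) : MVal M A := by
  intro w ρ hρ
  cases h with
  | allE A u v hv => exact fun hall => (sat_rename M A hv w ρ).mpr (hall (ρ v) (hρ v))
  | allK A B u => exact fun h₁ h₂ a ha => h₁ a ha (h₂ a ha)
  | allV A u hu =>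
    refine fun hA a _ => (sat_congr_free M A w fun x hx => ?_).mp hA
    exact (Function.update_of_ne (ne_of_mem_of_not_mem hx hu) _ _).symm
  | k A B => exact fun h₁ h₂ v hv => h₁ v hv (h₂ v hv)
  | _ => simp only [Sat] <;> tauto

/-- Only the depth of each single world has to be finite, not the height of the frame:
`parityModel` below has worlds of every depth. -/
theorem NQGL.sound (htrans : ∀ {a b c : M.W}, M.R a b → M.R b c → M.R a c)
    (hdepth : ∀ w : M.W, ∃ n, ∀ ρ, Sat M (boxIter (n + 1) falsum) w ρ)
    {A : Fml} (h : NQGL A) : MVal M A := by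
  induction h with
  | ax h => exact Ax.sound M h
  | four A => exact fun w ρ _ hA v hv v' hv' => hA v' (htrans hv hv')
  | mp _ _ ih₁ ih₂ => exact fun w ρ hρ => ih₁ w ρ hρ (ih₂ w ρ hρ)
  | nec _ ih => exact fun w ρ hρ v hv => ih v ρ fun x => M.mono hv (hρ x)
  | gen u _ ih =>
    refine fun w ρ hρ a ha => ih w _ fun x => ?_
    by_cases hxu : x = u
    · simpa [hxu] using ha
    · simpa [hxu] using hρ x
  | bl _ ih =>
    intro w ρ hρ
    obtain ⟨n, hn⟩ := hdepth w
    exact ih n w ρ hρ (hn ρ)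

theorem sat_land {A B : Fml} {w : M.W} {ρ : ℕ → M.Dom} :
    Sat M (A.land B) w ρ ↔ Sat M A w ρ ∧ Sat M B w ρ := by
  simp only [land, Sat]; tauto

theorem sat_iff {A B : Fml} {w : M.W} {ρ : ℕ → M.Dom} :
    Sat M (A.iff B) w ρ ↔ (Sat M A w ρ ↔ Sat M B w ρ) := by
  simp only [Fml.iff, sat_land, Sat]; tauto

theorem sat_boxdot {A : Fml} {w : M.W} {ρ : ℕ → M.Dom} :
    Sat M A.boxdot w ρ ↔ (∀ v, M.R w v → Sat M A v ρ) ∧ Sat M A w ρ := by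
  simp only [boxdot, sat_land, Sat]

theorem sat_ex {A : Fml} {u : ℕ} {w : M.W} {ρ : ℕ → M.Dom} :
    Sat M (ex u A) w ρ ↔ ∃ a ∈ M.D w, Sat M A w (Function.update ρ u a) := by
  simp only [ex, Sat, not_forall, not_not, exists_prop]

end Semantics

/-- Smoryński's model `MS` with every predicate symbol other than `P` true exactly at the even
worlds. -/
abbrev parityModel : KModel where
  W := ℕ
  R := fun m n => n < m
  Dom := ℕ
  D := fun n => {m | n ≤ m}
  Dne := fun n => ⟨n, le_refl n⟩
  mono := fun h _ hx => le_trans (le_of_lt h) hx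
  I := fun w P L => if P = 0 then ∀ m ∈ L, m ≠ w + 1 else w % 2 = 0
  V := fun _ _ => False

section ParityModel

variable {w : ℕ} {ρ : ℕ → ℕ}

theorem parityModel_sat_P {args : List ℕ} :
    Sat parityModel (pred 0 args) w ρ ↔ ∀ x ∈ args, ρ x ≠ w + 1 := by
  simp [Sat, parityModel]

theorem parityModel_sat_pred_of_ne_zero {c : ℕ} (hc : c ≠ 0) {args : List ℕ} :
    Sat parityModel (pred c args) w ρ ↔ w % 2 = 0 := by
  simp [Sat, hc]

theorem parityModel_sat_boxIter_falsum {n : ℕ} (hw : w < n) :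
    Sat parityModel (boxIter n falsum) w ρ := by
  induction n generalizing w with
  | zero => omega
  | succ n ih => exact fun v hv => ih (lt_of_lt_of_le hv (Nat.le_of_lt_succ hw))

theorem parityModel_sound {A : Fml} (h : NQGL A) : MVal parityModel A :=
  NQGL.sound parityModel (fun {_ _ _} h₁ h₂ => lt_trans h₂ h₁)
    (fun w => ⟨w, fun _ => parityModel_sat_boxIter_falsum (Nat.lt_succ_self w)⟩) h

-- `A(Q)` fails at `w` exactly when the world `w - 1` below `w` is even: take `u = w`
theorem parityModel_sat_AMonAp {c : ℕ} (hc : c ≠ 0) :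
    Sat parityModel (AMonAp (pred c [c])) w ρ ↔ w % 2 = 0 := by
  simp only [AMonAp, AMon, psub, ↓reduceIte, Sat, parityModel, hc, List.map_cons, List.map_nil,
    List.mem_singleton, forall_eq, Function.update_self, Set.mem_ofPred_eq]
  constructor
  · intro h
    by_contra hodd
    exact h w le_rfl (w - 1) (by omega) (by omega) (by omega)
  · intro hw a ha v hv hv2
    omega

theorem parityModel_sat_fixedPoint {c : ℕ} (hc : c ≠ 0) :
    Sat parityModel ((AMonAp (pred c [c])).iff (pred c [c])).boxdot w ρ := by
  simp [sat_boxdot, sat_iff, parityModel_sat_AMonAp hc, parityModel_sat_pred_of_ne_zero hc]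

theorem parityModel_sat_ante (hw : w % 2 = 0) : Sat parityModel ante w ρ :=
  (sat_ex parityModel).mpr ⟨w, le_refl w, (sat_land parityModel).mpr
    ⟨parityModel_sat_fixedPoint one_ne_zero, (parityModel_sat_pred_of_ne_zero one_ne_zero).mpr hw⟩⟩

theorem parityModel_not_sat_cons (hw : w % 2 = 1) : ¬ Sat parityModel cons w ρ := fun h => by
  have := (parityModel_sat_pred_of_ne_zero two_ne_zero).mp
    (h w (le_refl w) (parityModel_sat_fixedPoint two_ne_zero))
  omega

end ParityModel

def Fml.depth : Fml → ℕ
  | neg A => A.depth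
  | imp A B => max A.depth B.depth
  | all _ A => A.depth + 1
  | box A => A.depth + 1
  | _ => 0

/-- In `parityModel` the atom `P(x)` fails at `w` only for `x = w + 1`, so all that matters about an
element above `w` is whether its offset from `w` is `0`, `1` or `≥ 2`; this survives passing to a
lower world. -/
def Matches (v₁ v₂ a b : ℕ) : Prop :=
  v₁ ≤ a ∧ v₂ ≤ b ∧ (a - v₁ = b - v₂ ∨ 2 ≤ a - v₁ ∧ 2 ≤ b - v₂)

namespace Matches

variable {v₁ v₂ v₁' v₂' a b : ℕ}

theorem symm (h : Matches v₁ v₂ a b) : Matches v₂ v₁ b a := by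
  unfold Matches at *; omega

theorem trans (h₁ : Matches v₁' v₂' v₁ v₂) (h₂ : Matches v₁ v₂ a b) : Matches v₁' v₂' a b := by
  unfold Matches at *; omega

theorem eq_succ_iff (h : Matches v₁ v₂ a b) : a = v₁ + 1 ↔ b = v₂ + 1 := by
  unfold Matches at *; omega

end Matches

def Similar (j v₁ v₂ : ℕ) (ρ₁ ρ₂ : ℕ → ℕ) : Prop :=
  (∀ x, Matches v₁ v₂ (ρ₁ x) (ρ₂ x)) ∧ (v₁ = v₂ ∨ 2 * j ≤ v₁ ∧ 2 * j ≤ v₂)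

namespace Similar

variable {j v₁ v₂ : ℕ} {ρ₁ ρ₂ : ℕ → ℕ}

theorem symm (h : Similar j v₁ v₂ ρ₁ ρ₂) : Similar j v₂ v₁ ρ₂ ρ₁ :=
  ⟨fun x => (h.1 x).symm, h.2.imp Eq.symm And.symm⟩

theorem exists_lt (h : Similar (j + 1) v₁ v₂ ρ₁ ρ₂) {v₁' : ℕ} (hv : v₁' < v₁) :
    ∃ v₂' < v₂, Similar j v₁' v₂' ρ₁ ρ₂ := by
  -- copy the step down below `2j`; above it, step down by the same amount capped at `2`
  obtain ⟨hρ, hv₁₂⟩ := h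
  refine ⟨if 2 * j ≤ v₁' then v₂ - min (v₁ - v₁') 2 else v₁', ?_,
    fun x => Matches.trans ?_ (hρ x), ?_⟩ <;> simp only [Matches] at * <;> split_ifs <;> omega

theorem exists_update (h : Similar (j + 1) v₁ v₂ ρ₁ ρ₂) (u : ℕ) {a : ℕ} (ha : v₁ ≤ a) :
    ∃ b, v₂ ≤ b ∧ Similar j v₁ v₂ (Function.update ρ₁ u a) (Function.update ρ₂ u b) := by
  obtain ⟨hρ, hv₁₂⟩ := h
  refine ⟨v₂ + (a - v₁), by omega, fun x => ?_, by omega⟩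
  by_cases hxu : x = u
  · subst hxu
    simp only [Function.update_self, Matches]
    omega
  · simpa only [Function.update_of_ne hxu] using hρ x

end Similar

theorem sat_iff_of_similar {G : Fml} (hG : G.preds ⊆ {0}) {j v₁ v₂ : ℕ} {ρ₁ ρ₂ : ℕ → ℕ}
    (hj : G.depth ≤ j) (h : Similar j v₁ v₂ ρ₁ ρ₂) :
    Sat parityModel G v₁ ρ₁ ↔ Sat parityModel G v₂ ρ₂ := by
  induction G generalizing j v₁ v₂ ρ₁ ρ₂ with
  | pred P args =>
    obtain rfl : P = 0 := Finset.mem_singleton.mp (hG (by simp [preds]))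
    simp only [parityModel_sat_P]
    exact forall₂_congr fun x _ => not_congr (h.1 x).eq_succ_iff
  | neg A ih => exact not_congr (ih hG hj h)
  | imp A B ihA ihB =>
    have hAB : A.depth ≤ j ∧ B.depth ≤ j := max_le_iff.mp hj
    exact imp_congr (ihA (fun _ hx => hG (Finset.mem_union_left _ hx)) hAB.1 h)
      (ihB (fun _ hx => hG (Finset.mem_union_right _ hx)) hAB.2 h)
  | all u A ih =>
    obtain ⟨j, rfl⟩ : ∃ j', j = j' + 1 := ⟨j - 1, by simp only [depth] at hj; omega⟩
    have hA : A.depth ≤ j := Nat.le_of_succ_le_succ hj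
    constructor
    · intro hall b hb
      obtain ⟨a, ha, hsim⟩ := h.symm.exists_update u hb
      exact (ih hG hA hsim.symm).mp (hall a ha)
    · intro hall a ha
      obtain ⟨b, hb, hsim⟩ := h.exists_update u ha
      exact (ih hG hA hsim).mpr (hall b hb)
  | box A ih =>
    obtain ⟨j, rfl⟩ : ∃ j', j = j' + 1 := ⟨j - 1, by simp only [depth] at hj; omega⟩
    have hA : A.depth ≤ j := Nat.le_of_succ_le_succ hj
    constructor
    · intro hall v₂' hv₂'
      obtain ⟨v₁', hv₁', hsim⟩ := h.symm.exists_lt hv₂'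
      exact (ih hG hA hsim.symm).mp (hall v₁' hv₁')
    · intro hall v₁' hv₁'
      obtain ⟨v₂', hv₂', hsim⟩ := h.exists_lt hv₁'
      exact (ih hG hA hsim).mpr (hall v₂' hv₂')
  | _ => exact Iff.rfl

end PML

open PML PML.Fml in
/-- NQGL proves ante → cons, but this implication has no interpolant
in the shared predicate symbol P; hence NQGL lacks the Craig interpolation property. -/
theorem stmt19 :
    NQGL (PML.ante.imp PML.cons) ∧
    ¬ ∃ G : Fml, G.preds ⊆ {0} ∧ G.pvars = ∅ ∧ G.free = ∅ ∧
        NQGL (PML.ante.imp G) ∧ NQGL (G.imp PML.cons) := by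
  refine ⟨ante_imp_cons, ?_⟩
  rintro ⟨G, hG, -, -, h_ante, h_cons⟩
  set k := G.depth
  have h_even : Sat parityModel G (2 * k : ℕ) (fun _ => 2 * k) :=
    parityModel_sound h_ante _ _ (fun _ => le_refl (2 * k)) (parityModel_sat_ante (by omega))
  have h_odd : ¬ Sat parityModel G (2 * k + 1 : ℕ) (fun _ => 2 * k + 1) := fun hG =>
    parityModel_not_sat_cons (by omega)
      (parityModel_sound h_cons _ _ (fun _ => le_refl (2 * k + 1)) hG)
  have h_similar : Similar k (2 * k) (2 * k + 1) (fun _ => 2 * k) (fun _ => 2 * k + 1) :=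
    ⟨fun _ => by simp [Matches], Or.inr (by omega)⟩
  exact h_odd ((sat_iff_of_similar hG le_rfl h_similar).mp h_even)
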